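/- arXiv:2305.06765 — 2 statements merged into one kernel-verified Lean document; each statement's English description precedes it below -/
import Mathlib

section
/- (John-type necessary conditions with Dini derivatives.) Let x̂ solve: maximize f_0(x) over x ∈ Ω with f_i(x) ≥ 0 for i = 1,…,m. Assume each f_j with f_j(x̂) > 0 is lower semicontinuous at x̂, and each f_i (i = 0,…,m) is D^-_M-differentiable at x̂. Then there exist λ^0,…,λ^m ≥ 0, not all zero, with λ^i f_i(x̂) = 0 for i = 1,…,m, and Σ_{i=0}^m λ^i D^-_M f_i(x̂)(u) ≤ 0 for all u ∈ E. -/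
open Filter Topology

variable {E : Type*} [NormedAddCommGroup E] [NormedSpace ℝ E]

/-- Difference quotient of `f` at `x` in direction `u`. -/
noncomputable def diniQuot (f : E → ℝ) (x u : E) : ℝ → ℝ :=
  fun t => (f (x + t • u) - f x) / t

/-- Lower Dini derivative `D⁻ f(x)(u)`. -/
noncomputable def lowerDini (f : E → ℝ) (x u : E) : ℝ :=
  liminf (diniQuot f x u) (𝓝[>] 0)

/-- Upper Dini derivative `D⁺ f(x)(u)`. -/
noncomputable def upperDini (f : E → ℝ) (x u : E) : ℝ :=
  limsup (diniQuot f x u) (𝓝[>] 0)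

/-- Modified lower Dini derivative `D⁻_M f(x)(u)`. -/
noncomputable def lowerDiniM (f : E → ℝ) (x u : E) : ℝ :=
  ⨅ w : E, (lowerDini f x (u + w) - lowerDini f x w)

/-- Modified upper Dini derivative `D⁺_M f(x)(u)`. -/
noncomputable def upperDiniM (f : E → ℝ) (x u : E) : ℝ :=
  ⨆ w : E, (upperDini f x (u + w) - upperDini f x w)

/-- The difference quotients of `f` at `x` in direction `u` are bounded near `0⁺`,
so that the lower/upper Dini derivatives are genuine (finite) values. -/
def DiniFinite (f : E → ℝ) (x u : E) : Prop :=
  IsBoundedUnder (· ≤ ·) (𝓝[>] (0:ℝ)) (diniQuot f x u) ∧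
  IsBoundedUnder (· ≥ ·) (𝓝[>] (0:ℝ)) (diniQuot f x u)

/-- Finiteness of the modified lower Dini derivative. -/
def LowerDiniMFinite (f : E → ℝ) (x u : E) : Prop :=
  BddBelow (Set.range fun w : E => lowerDini f x (u + w) - lowerDini f x w)

/-- Finiteness of the modified upper Dini derivative. -/
def UpperDiniMFinite (f : E → ℝ) (x u : E) : Prop :=
  BddAbove (Set.range fun w : E => upperDini f x (u + w) - upperDini f x w)

/-! `u ↦ D⁻_M f(x̂)(u)` is superadditive and positively homogeneous, hence concave.
If some direction `u` made `D⁻_M f_i(x̂)(u) > 0` for `f_0` and for every active constraint, then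
`x̂ + s u` would, for small `s > 0`, be feasible (inactive constraints stay positive by lower
semicontinuity) and strictly better than `x̂`. So these finitely many concave functions `G_i` are
never simultaneously positive, and separating `0` from the open convex set `{y | ∃ u, y < G u}`
yields nonnegative multipliers, not all zero, for the active indices; the inactive constraints get
multiplier `0`, which is complementary slackness. -/

open Set

theorem nonpos_of_forall_pos_lt_mul {a b : ℝ} (h : ∀ t > 0, a < t * b) : a ≤ 0 := by
  by_contra! ha
  rcases le_or_gt b 0 with hb | hb
  · linarith [h 1 one_pos]
  · have hlt := h (a / b) (div_pos ha hb)
    rw [div_mul_cancel₀ _ hb.ne'] at hlt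
    exact hlt.false

theorem nonneg_of_forall_pos_lt_mul {a b : ℝ} (h : ∀ t > 0, a < t * b) : 0 ≤ b := by
  by_contra! hb
  have hab := h ((|a| + 1) / -b) (div_pos (by positivity) (neg_pos.2 hb))
  rw [div_mul_eq_mul_div, div_neg, mul_div_cancel_right₀ _ hb.ne] at hab
  linarith [neg_abs_le a]

theorem exists_nonneg_ne_zero_sum_mul_nonpos_of_concaveOn {ι V : Type*} [Fintype ι]
    [AddCommGroup V] [Module ℝ V] {G : ι → V → ℝ} (hG : ∀ i, ConcaveOn ℝ univ (G i))
    (h : ∀ u, ∃ i, G i u ≤ 0) :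
    ∃ lam : ι → ℝ, (∀ i, 0 ≤ lam i) ∧ lam ≠ 0 ∧ ∀ u, ∑ i, lam i * G i u ≤ 0 := by
  classical
  set K : Set (ι → ℝ) := ⋃ u, univ.pi fun i => Iio (G i u)
  have hK_open : IsOpen K :=
    isOpen_iUnion fun u => isOpen_set_pi finite_univ fun i _ => isOpen_Iio
  have hK_convex : Convex ℝ K := by
    refine convex_iff_forall_pos.2 ?_
    simp only [K, mem_iUnion, mem_univ_pi, mem_Iio]
    rintro y ⟨u, hy⟩ z ⟨v, hz⟩ a b ha hb hab
    refine ⟨a • u + b • v, fun i => ?_⟩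
    calc (a • y + b • z) i = a * y i + b * z i := rfl
      _ < a * G i u + b * G i v := by gcongr <;> simp_all
      _ ≤ G i (a • u + b • v) := (hG i).2 (mem_univ _) (mem_univ _) ha.le hb.le hab
  have hK_zero : (0 : ι → ℝ) ∉ K := by
    simpa [K] using h
  obtain ⟨φ, hφ⟩ := geometric_hahn_banach_open_point hK_convex hK_open hK_zero
  -- `K` is closed downwards, which is what makes the coordinates of `φ` nonnegative
  have hφG : ∀ u w, (∀ i, 0 < w i) → φ (fun i => G i u) < φ w := by
    intro u w hw
    have hmem : (fun i => G i u) - w ∈ K := mem_iUnion.2 ⟨u, fun i _ => by simp [hw i]⟩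
    simpa using hφ _ hmem
  set lam : ι → ℝ := fun i => φ fun j => if i = j then 1 else 0
  have hφ_eq : ∀ y, φ y = ∑ i, lam i * y i := fun y => by
    simpa [mul_comm] using (φ : (ι → ℝ) →ₗ[ℝ] ℝ).pi_apply_eq_sum_univ y
  refine ⟨lam, fun i => ?_, fun hlam => ?_, fun u => ?_⟩
  · refine nonneg_of_forall_pos_lt_mul (a := φ (fun i => G i 0) - φ 1) fun t ht => ?_
    have hlt := hφG 0 (1 + t • fun j => if i = j then 1 else 0) fun j => by
      by_cases hij : i = j <;> simp [hij, add_pos one_pos ht]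
    rw [map_add, map_smul, smul_eq_mul] at hlt
    linarith
  · simpa [hφ_eq, hlam] using hφG 0 1 fun _ => one_pos
  · rw [← hφ_eq]
    refine nonpos_of_forall_pos_lt_mul (b := φ 1) fun t ht => ?_
    simpa using hφG u (t • 1) fun _ => by simp [ht]

theorem exists_nonneg_ne_zero_sum_mul_nonpos_of_concaveOn_supported {ι V : Type*} [Fintype ι]
    [AddCommGroup V] [Module ℝ V] {p : ι → Prop} {G : ι → V → ℝ}
    (hG : ∀ i, p i → ConcaveOn ℝ univ (G i)) (h : ∀ u, ∃ i, p i ∧ G i u ≤ 0) :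
    ∃ lam : ι → ℝ, (∀ i, 0 ≤ lam i) ∧ lam ≠ 0 ∧ (∀ i, ¬p i → lam i = 0) ∧
      ∀ u, ∑ i, lam i * G i u ≤ 0 := by
  classical
  obtain ⟨μ, hμ_nonneg, hμ_ne, hμ⟩ := exists_nonneg_ne_zero_sum_mul_nonpos_of_concaveOn
    (G := fun j : Subtype p => G j) (fun j => hG j j.2) fun u => by simpa using h u
  let lam : ι → ℝ := fun i => if hi : p i then μ ⟨i, hi⟩ else 0
  have hlam_sum : ∀ u, ∑ i, lam i * G i u = ∑ j : Subtype p, μ j * G j u := fun u => by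
    rw [← Finset.sum_filter_of_ne (p := p) fun i _ hi => by by_contra h; simp [lam, h] at hi,
      Finset.sum_subtype (p := p) _ (by simp)]
    exact Finset.sum_congr rfl fun j _ => by simp [lam, j.2]
  refine ⟨lam, fun i => ?_, fun hlam => hμ_ne ?_, fun i hi => dif_neg hi, fun u => ?_⟩
  · unfold lam; split_ifs
    exacts [hμ_nonneg _, le_rfl]
  · funext j
    simpa [lam, j.2] using congrFun hlam j
  · exact (hlam_sum u).trans_le (hμ u)

theorem map_mul_left_nhdsGT_zero {t : ℝ} (ht : 0 < t) : map (t * ·) (𝓝[>] (0 : ℝ)) = 𝓝[>] 0 := by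
  conv_lhs => rw [← comap_mulLeft_nhdsGT_zero ht]
  exact map_comap_of_surjective (mul_left_surjective₀ ht.ne') _

section Dini

variable (f : E → ℝ) (x : E)

theorem diniQuot_smul (u : E) {t : ℝ} (ht : t ≠ 0) :
    diniQuot f x (t • u) = fun s => t * diniQuot f x u (t * s) := by
  funext s
  rw [diniQuot, diniQuot, smul_smul, mul_comm s t, ← mul_div_assoc, mul_div_mul_left _ _ ht]

theorem lowerDini_smul {u : E} (hu : DiniFinite f x u) {t : ℝ} (ht : 0 < t) :
    lowerDini f x (t • u) = t * lowerDini f x u := by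
  have hcomp : diniQuot f x (t • u) = ((t * ·) ∘ diniQuot f x u) ∘ (t * ·) :=
    diniQuot_smul f x u ht.ne'
  rw [lowerDini, hcomp, liminf_comp, map_mul_left_nhdsGT_zero ht, lowerDini,
    (monotone_mul_left_of_nonneg ht.le).map_liminf_of_continuousAt _
      (continuous_const_mul t).continuousAt hu.1.isCoboundedUnder_ge hu.2]

theorem lowerDini_zero : lowerDini f x 0 = 0 := by
  have h : diniQuot f x 0 = fun _ => 0 := by
    funext t
    simp [diniQuot]
  rw [lowerDini, h, liminf_const]

theorem lowerDiniM_zero : lowerDiniM f x 0 = 0 := by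
  simp [lowerDiniM]

theorem lowerDiniM_le_lowerDini {u : E} (hu : LowerDiniMFinite f x u) :
    lowerDiniM f x u ≤ lowerDini f x u := by
  simpa [lowerDiniM, lowerDini_zero] using ciInf_le hu 0

theorem lowerDiniM_add_le {u v : E} (hu : LowerDiniMFinite f x u) (hv : LowerDiniMFinite f x v) :
    lowerDiniM f x u + lowerDiniM f x v ≤ lowerDiniM f x (u + v) := by
  refine le_ciInf fun w => ?_
  have hu_w : lowerDiniM f x u ≤ _ := ciInf_le hu (v + w)
  have hv_w : lowerDiniM f x v ≤ _ := ciInf_le hv w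
  simp only [← add_assoc] at hu_w
  linarith

theorem mul_lowerDiniM_le (hfin : ∀ v, DiniFinite f x v) {u : E} (hu : LowerDiniMFinite f x u)
    {t : ℝ} (ht : 0 ≤ t) : t * lowerDiniM f x u ≤ lowerDiniM f x (t • u) := by
  rcases ht.eq_or_lt with rfl | ht
  · simp [lowerDiniM_zero]
  refine le_ciInf fun w => ?_
  have hw : t • t⁻¹ • w = w := smul_inv_smul₀ ht.ne' w
  calc t * lowerDiniM f x u
      ≤ t * (lowerDini f x (u + t⁻¹ • w) - lowerDini f x (t⁻¹ • w)) := by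
        gcongr; exact ciInf_le hu _
    _ = lowerDini f x (t • u + w) - lowerDini f x w := by
        rw [mul_sub, ← lowerDini_smul f x (hfin _) ht, ← lowerDini_smul f x (hfin _) ht,
          smul_add, hw]

theorem concaveOn_lowerDiniM (hfin : ∀ v, DiniFinite f x v) (hM : ∀ u, LowerDiniMFinite f x u) :
    ConcaveOn ℝ univ (lowerDiniM f x) := by
  refine ⟨convex_univ, fun u _ v _ a b ha hb _ => ?_⟩
  calc a • lowerDiniM f x u + b • lowerDiniM f x v
      ≤ lowerDiniM f x (a • u) + lowerDiniM f x (b • v) :=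
        add_le_add (mul_lowerDiniM_le f x hfin (hM u) ha) (mul_lowerDiniM_le f x hfin (hM v) hb)
    _ ≤ lowerDiniM f x (a • u + b • v) := lowerDiniM_add_le f x (hM _) (hM _)

theorem eventually_lt_of_lowerDini_pos {u : E}
    (hu : IsBoundedUnder (· ≥ ·) (𝓝[>] (0 : ℝ)) (diniQuot f x u)) (hpos : 0 < lowerDini f x u) :
    ∀ᶠ s in 𝓝[>] (0 : ℝ), f x < f (x + s • u) := by
  filter_upwards [eventually_lt_of_lt_liminf hpos hu, self_mem_nhdsWithin] with s hs hs0
  rw [diniQuot, div_pos_iff_of_pos_right hs0, sub_pos] at hs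
  exact hs

end Dini

theorem exists_active_lowerDiniM_nonpos {m : ℕ} {Ω : Set E} (hΩ : IsOpen Ω)
    {f : Fin (m + 1) → E → ℝ} {xh : E} (hx : xh ∈ Ω)
    (hfeas : ∀ i : Fin (m + 1), i ≠ 0 → 0 ≤ f i xh)
    (hmax : ∀ x ∈ Ω, (∀ i : Fin (m + 1), i ≠ 0 → 0 ≤ f i x) → f 0 x ≤ f 0 xh)
    (hlsc : ∀ i : Fin (m + 1), i ≠ 0 → 0 < f i xh → LowerSemicontinuousAt (f i) xh) (u : E)
    (hbdd : ∀ i, IsBoundedUnder (· ≥ ·) (𝓝[>] (0 : ℝ)) (diniQuot (f i) xh u))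
    (hM : ∀ i, LowerDiniMFinite (f i) xh u) :
    ∃ i, (i = 0 ∨ f i xh = 0) ∧ lowerDiniM (f i) xh u ≤ 0 := by
  by_contra! hpos
  have hincr : ∀ i, (i = 0 ∨ f i xh = 0) → ∀ᶠ s in 𝓝[>] (0 : ℝ), f i xh < f i (xh + s • u) :=
    fun i hi => eventually_lt_of_lowerDini_pos _ _ (hbdd i)
      ((hpos i hi).trans_le (lowerDiniM_le_lowerDini _ _ (hM i)))
  have hpath : Tendsto (fun s : ℝ => xh + s • u) (𝓝[>] 0) (𝓝 xh) := by
    have h : Continuous fun s : ℝ => xh + s • u := by fun_prop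
    simpa using (h.tendsto 0).mono_left nhdsWithin_le_nhds
  have hfeas_near : ∀ i : Fin (m + 1), ∀ᶠ s in 𝓝[>] (0 : ℝ), i ≠ 0 → 0 ≤ f i (xh + s • u) := by
    refine fun i => eventually_imp_distrib_left.2 fun hi => ?_
    rcases (hfeas i hi).eq_or_lt with h0 | hlt
    · filter_upwards [hincr i (Or.inr h0.symm)] with s hs
      linarith
    · filter_upwards [hpath.eventually (hlsc i hi hlt 0 hlt)] with s hs using hs.le
  obtain ⟨s, hsΩ, hsfeas, hs0⟩ := ((hpath.eventually (hΩ.mem_nhds hx)).and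
    ((eventually_all.2 hfeas_near).and (hincr 0 (Or.inl rfl)))).exists
  exact (hmax _ hsΩ hsfeas).not_gt hs0

theorem john_dini_general (m : ℕ) (Ω : Set E) (hΩ : IsOpen Ω)
    (f : Fin (m + 1) → E → ℝ) (xh : E) (hx : xh ∈ Ω)
    (hfeas : ∀ i : Fin (m + 1), i ≠ 0 → 0 ≤ f i xh)
    (hmax : ∀ x ∈ Ω, (∀ i : Fin (m + 1), i ≠ 0 → 0 ≤ f i x) → f 0 x ≤ f 0 xh)
    (hlsc : ∀ i : Fin (m + 1), i ≠ 0 → 0 < f i xh → LowerSemicontinuousAt (f i) xh)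
    (hfin : ∀ i u, DiniFinite (f i) xh u)
    (hMfin : ∀ i u, LowerDiniMFinite (f i) xh u) :
    ∃ lam : Fin (m + 1) → ℝ,
      (∀ i, 0 ≤ lam i) ∧ lam ≠ 0 ∧
      (∀ i : Fin (m + 1), i ≠ 0 → lam i * f i xh = 0) ∧
      ∀ u : E, ∑ i, lam i * lowerDiniM (f i) xh u ≤ 0 := by
  obtain ⟨lam, hlam_nonneg, hlam_ne, hslack, hsum⟩ :=
    exists_nonneg_ne_zero_sum_mul_nonpos_of_concaveOn_supported
      (p := fun i => i = 0 ∨ f i xh = 0) (fun i _ => concaveOn_lowerDiniM _ _ (hfin i) (hMfin i))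
      fun u => exists_active_lowerDiniM_nonpos hΩ hx hfeas hmax hlsc u (fun i => (hfin i u).2)
        fun i => hMfin i u
  refine ⟨lam, hlam_nonneg, hlam_ne, fun i hi => ?_, hsum⟩
  by_cases h : f i xh = 0
  · rw [h, mul_zero]
  · rw [hslack i (by tauto), zero_mul]

/-- John-type necessary conditions with Dini derivatives:
if `xh` maximizes `f 0` over `{x ∈ Ω : f i x ≥ 0, 1 ≤ i ≤ m}`, the inactive
constraints are lower semicontinuous at `xh`, and all functions are
`D⁻_M`-differentiable at `xh`, then nonnegative multipliers `lam`, not all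
zero, exist with complementary slackness and
`∑ i, lam i * D⁻_M f_i(xh)(u) ≤ 0` for all `u`. -/
theorem john_dini (m : ℕ) (Ω : Set E) (hΩ : IsOpen Ω) (hΩne : Ω.Nonempty)
    (f : Fin (m + 1) → E → ℝ) (xh : E) (hx : xh ∈ Ω)
    (hfeas : ∀ i : Fin (m + 1), i ≠ 0 → 0 ≤ f i xh)
    (hmax : ∀ x ∈ Ω, (∀ i : Fin (m + 1), i ≠ 0 → 0 ≤ f i x) → f 0 x ≤ f 0 xh)
    (hlsc : ∀ i : Fin (m + 1), i ≠ 0 → 0 < f i xh → LowerSemicontinuousAt (f i) xh)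
    (hfin : ∀ i u, DiniFinite (f i) xh u)
    (hMfin : ∀ i u, LowerDiniMFinite (f i) xh u) :
    ∃ lam : Fin (m + 1) → ℝ,
      (∀ i, 0 ≤ lam i) ∧ lam ≠ 0 ∧
      (∀ i : Fin (m + 1), i ≠ 0 → lam i * f i xh = 0) ∧
      ∀ u : E, ∑ i, lam i * lowerDiniM (f i) xh u ≤ 0 :=
  john_dini_general m Ω hΩ f xh hx hfeas hmax hlsc hfin hMfin
end

section
/- (Invariance of Dini derivatives under Lipschitz composition with an implicit map.) Let E be a Banach space, f : E → ℝ Lipschitz near x̂ = â + b̂, and φ a map defined near â with φ(â) = b̂ that is Fréchet differentiable at â with d_F φ(â) = 0. Define g(x) = f(x + φ(x)). Then for every direction μ, D^- g(â)(μ) = D^- f(x̂)(μ), and consequently D^-_M g(â)(μ) = D^-_M f(x̂)(μ). -/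
/-! Along a ray `t ↦ a + t • μ` in `K`, the vanishing derivative of `φ` gives
`φ (a + t • μ) - φ a = o(t)`, so by the Lipschitz bound the difference quotients of
`x ↦ f (x + φ x)` at `a` and of `f` at `a + φ a` differ by `o(1)`. As the quotients of `f` are
bounded, their liminfs coincide; the modified derivatives are then infima of equal numbers. -/

open Filter Topology

variable {E : Type*} [NormedAddCommGroup E] [NormedSpace ℝ E]

theorem liminf_eq_liminf_of_tendsto_sub {ι : Type*} {l : Filter ι} [l.NeBot] {a b : ι → ℝ}
    (h : Tendsto (a - b) l (𝓝 0))
    (hb_le : IsBoundedUnder (· ≤ ·) l b) (hb_ge : IsBoundedUnder (· ≥ ·) l b) :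
    liminf a l = liminf b l := by
  apply le_antisymm
  · calc liminf a l = liminf ((a - b) + b) l := by rw [sub_add_cancel]
      _ ≤ limsup (a - b) l + liminf b l :=
          liminf_add_le h.isBoundedUnder_ge h.isBoundedUnder_le hb_ge hb_le.isCoboundedUnder_ge
      _ = liminf b l := by rw [h.limsup_eq, zero_add]
  · calc liminf b l = liminf b l + liminf (a - b) l := by rw [h.liminf_eq, add_zero]
      _ ≤ liminf (b + (a - b)) l :=
          le_liminf_add hb_ge hb_le h.isBoundedUnder_ge h.isBoundedUnder_le.isCoboundedUnder_ge
      _ = liminf a l := by rw [add_sub_cancel]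

theorem tendsto_add_smul_nhds_zero (x u : E) : Tendsto (fun t : ℝ => x + t • u) (𝓝 0) (𝓝 x) :=
  (show Continuous fun t : ℝ => x + t • u by fun_prop).tendsto' 0 x (by simp)

theorem eventually_add_smul_mem {s : Set E} {x : E} (hs : s ∈ 𝓝 x) (u : E) :
    ∀ᶠ t in 𝓝[>] (0 : ℝ), x + t • u ∈ s :=
  nhdsWithin_le_nhds ((tendsto_add_smul_nhds_zero x u).eventually_mem hs)

theorem Submodule.tendsto_add_smul_nhdsWithin (K : Submodule ℝ E) {a u : E} (ha : a ∈ K)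
    (hu : u ∈ K) : Tendsto (fun t : ℝ => a + t • u) (𝓝 0) (𝓝[K] a) :=
  tendsto_nhdsWithin_iff.2 ⟨tendsto_add_smul_nhds_zero a u,
    Eventually.of_forall fun t => K.add_mem ha (K.smul_mem t hu)⟩

theorem HasFDerivWithinAt.isLittleO_sub_of_tendsto_ray {F : Type*} [NormedAddCommGroup F]
    [NormedSpace ℝ F] {φ : E → F} {S : Set E} {a u : E} {l : Filter ℝ}
    (hφ : HasFDerivWithinAt φ (0 : E →L[ℝ] F) S a)
    (hray : Tendsto (fun t : ℝ => a + t • u) l (𝓝[S] a)) :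
    (fun t : ℝ => φ (a + t • u) - φ a) =o[l] fun t => t := by
  have hsmul : (fun t : ℝ => t • u) =O[l] fun t => t :=
    .of_bound ‖u‖ (Eventually.of_forall fun t => by rw [norm_smul, mul_comm])
  have h := hφ.isLittleO.comp_tendsto hray
  simp only [zero_apply, sub_zero, Function.comp_def, add_sub_cancel_left] at h
  exact h.trans_isBigO hsmul

namespace LipschitzOnWith

variable {f : E → ℝ} {L : NNReal} {s : Set E} {x : E}

theorem eventually_abs_diniQuot_le (hf : LipschitzOnWith L f s) (hs : s ∈ 𝓝 x) (u : E) :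
    ∀ᶠ t in 𝓝[>] (0 : ℝ), |diniQuot f x u t| ≤ L * ‖u‖ := by
  filter_upwards [eventually_add_smul_mem hs u, self_mem_nhdsWithin] with t hts (ht : 0 < t)
  have hdist := hf.dist_le_mul _ hts _ (mem_of_mem_nhds hs)
  rw [Real.dist_eq, dist_eq_norm, add_sub_cancel_left, norm_smul, Real.norm_of_nonneg ht.le]
    at hdist
  rw [diniQuot, abs_div, abs_of_pos ht, div_le_iff₀ ht]
  linarith

theorem diniFinite (hf : LipschitzOnWith L f s) (hs : s ∈ 𝓝 x) (u : E) : DiniFinite f x u :=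
  have hbound := hf.eventually_abs_diniQuot_le hs u
  ⟨⟨L * ‖u‖, eventually_map.2 (hbound.mono fun _ h => (abs_le.1 h).2)⟩,
    ⟨-(L * ‖u‖), eventually_map.2 (hbound.mono fun _ h => (abs_le.1 h).1)⟩⟩

theorem tendsto_div_sub_of_isLittleO (hf : LipschitzOnWith L f s) (hs : s ∈ 𝓝 x) (u : E)
    {r : ℝ → E} (hr : r =o[𝓝[>] 0] fun t => t) :
    Tendsto (fun t => (f (x + t • u + r t) - f (x + t • u)) / t) (𝓝[>] 0) (𝓝 0) := by
  have hr₀ : Tendsto r (𝓝[>] 0) (𝓝 0) := hr.trans_tendsto nhdsWithin_le_nhds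
  have hmem : ∀ᶠ t in 𝓝[>] 0, x + t • u + r t ∈ s := by
    have hlim := ((tendsto_add_smul_nhds_zero x u).mono_left nhdsWithin_le_nhds).add hr₀
    rw [add_zero] at hlim
    exact hlim.eventually_mem hs
  have hO : (fun t => f (x + t • u + r t) - f (x + t • u)) =O[𝓝[>] 0] r := by
    refine .of_bound L ?_
    filter_upwards [hmem, eventually_add_smul_mem hs u] with t h₁ h₂
    simpa [dist_eq_norm] using hf.dist_le_mul _ h₁ _ h₂
  exact (hO.trans_isLittleO hr).tendsto_div_nhds_zero

end LipschitzOnWith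

theorem lowerDini_comp_add_eq {f : E → ℝ} {L : NNReal} {s : Set E} {φ : E → E} {S : Set E}
    {a u : E} (hf : LipschitzOnWith L f s) (hs : s ∈ 𝓝 (a + φ a))
    (hφ : HasFDerivWithinAt φ (0 : E →L[ℝ] E) S a)
    (hray : Tendsto (fun t : ℝ => a + t • u) (𝓝[>] 0) (𝓝[S] a)) :
    lowerDini (fun x => f (x + φ x)) a u = lowerDini f (a + φ a) u := by
  set r : ℝ → E := fun t => φ (a + t • u) - φ a
  have hquot : diniQuot (fun x => f (x + φ x)) a u - diniQuot f (a + φ a) u =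
      fun t => (f (a + φ a + t • u + r t) - f (a + φ a + t • u)) / t := by
    funext t
    simp only [Pi.sub_apply, diniQuot, r]
    rw [show a + φ a + t • u + (φ (a + t • u) - φ a) = a + t • u + φ (a + t • u) by abel]
    ring
  have hlim := hf.tendsto_div_sub_of_isLittleO hs u (hφ.isLittleO_sub_of_tendsto_ray hray)
  exact liminf_eq_liminf_of_tendsto_sub (hquot ▸ hlim) (hf.diniFinite hs u).1
    (hf.diniFinite hs u).2

theorem dini_implicit_composition_general
    (K : Submodule ℝ E)
    (ah bh : E) (hah : ah ∈ K) (xh : E) (hxh : xh = ah + bh)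
    (f : E → ℝ) (L : NNReal) (s : Set E) (hs : s ∈ 𝓝 xh) (hf : LipschitzOnWith L f s)
    (φ : E → E) (hφa : φ ah = bh)
    (hφd : HasFDerivWithinAt φ (0 : E →L[ℝ] E) (K : Set E) ah) :
    (∀ μ ∈ K, lowerDini (fun x => f (x + φ x)) ah μ = lowerDini f xh μ) ∧
    (∀ μ ∈ K,
      (⨅ w : K, (lowerDini (fun x => f (x + φ x)) ah (μ + (w : E)) -
        lowerDini (fun x => f (x + φ x)) ah (w : E))) =
      ⨅ w : K, (lowerDini f xh (μ + (w : E)) - lowerDini f xh (w : E))) := by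
  subst hxh hφa
  have hdini : ∀ μ ∈ K, lowerDini (fun x => f (x + φ x)) ah μ = lowerDini f (ah + φ ah) μ :=
    fun μ hμ => lowerDini_comp_add_eq hf hs hφd
      ((K.tendsto_add_smul_nhdsWithin hah hμ).mono_left nhdsWithin_le_nhds)
  refine ⟨hdini, fun μ hμ => iInf_congr fun w => ?_⟩
  rw [hdini _ (K.add_mem hμ w.2), hdini _ w.2]

/-- invariance of Dini derivatives under Lipschitz composition
with an implicit map: with `E = K ⊕ E₁`, `xh = ah + bh`, `f` Lipschitz near
`xh`, and `φ` mapping a neighborhood of `ah` in `K` into `E₁` with `φ ah = bh`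
and zero Fréchet derivative (within `K`) at `ah`, the function
`g x = f (x + φ x)` has the same lower Dini derivative and the same modified
lower Dini derivative (in directions of `K`) at `ah` as `f` at `xh`. -/
theorem dini_implicit_composition [CompleteSpace E]
    (K E₁ : Submodule ℝ E) (hK : IsClosed (K : Set E)) (hE₁ : IsClosed (E₁ : Set E))
    (hcompl : IsCompl K E₁)
    (ah bh : E) (hah : ah ∈ K) (hbh : bh ∈ E₁) (xh : E) (hxh : xh = ah + bh)
    (f : E → ℝ) (L : NNReal) (s : Set E) (hs : s ∈ 𝓝 xh) (hf : LipschitzOnWith L f s)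
    (φ : E → E) (U : Set E) (hU : U ∈ 𝓝[(K : Set E)] ah)
    (hmaps : ∀ x ∈ U, φ x ∈ E₁) (hφa : φ ah = bh)
    (hφd : HasFDerivWithinAt φ (0 : E →L[ℝ] E) (K : Set E) ah) :
    (∀ μ ∈ K, lowerDini (fun x => f (x + φ x)) ah μ = lowerDini f xh μ) ∧
    (∀ μ ∈ K,
      (⨅ w : K, (lowerDini (fun x => f (x + φ x)) ah (μ + (w : E)) -
        lowerDini (fun x => f (x + φ x)) ah (w : E))) =
      ⨅ w : K, (lowerDini f xh (μ + (w : E)) - lowerDini f xh (w : E))) :=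
  dini_implicit_composition_general K ah bh hah xh hxh f L s hs hf φ hφa hφd
end
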